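/- arXiv:1802.06587 — 4 statements merged into one kernel-verified Lean document; each statement's English description precedes it below -/
import Mathlib

section
/- Let g be a 2×2 complex matrix with det g = 1 satisfying g·ḡ = Id (where ḡ denotes entrywise complex conjugation). Then there exist a complex number w and real numbers λ, μ such that g = [[w, -iμ], [iλ, w̄]]; in particular |w|² - λμ = 1. -/
open Matrix Complex

/-- If `g` is a 2×2 complex matrix with `det g = 1` and `g·ḡ = Id`
(where `ḡ` is the entrywise complex conjugate), then `g` has the normal form
`[[w, -iμ], [iλ, w̄]]` with `w ∈ ℂ`, `λ, μ ∈ ℝ`; in particular `|w|² - λμ = 1`. -/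
theorem stmt0 (g : Matrix (Fin 2) (Fin 2) ℂ)
    (hdet : g.det = 1)
    (hreal : g * g.map (starRingEnd ℂ) = 1) :
    ∃ (w : ℂ) (lam mu : ℝ),
      g = !![w, -(Complex.I * (mu : ℂ)); Complex.I * (lam : ℂ), (starRingEnd ℂ) w] ∧
      Complex.normSq w - lam * mu = 1 := by
  have h1 : g⁻¹ = g.map (starRingEnd ℂ) := inv_eq_right_inv hreal
  have h2 : g⁻¹ = g.adjugate := by
    rw [Matrix.inv_def, hdet]; simp
  have h : g.map (starRingEnd ℂ) = !![g 1 1, -(g 0 1); -(g 1 0), g 0 0] := by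
    rw [← h1, h2, Matrix.adjugate_fin_two]
  have e00 : (starRingEnd ℂ) (g 0 0) = g 1 1 := by
    have := congrFun (congrFun h 0) 0; simpa using this
  have e01 : (starRingEnd ℂ) (g 0 1) = -(g 0 1) := by
    have := congrFun (congrFun h 0) 1; simpa using this
  have e10 : (starRingEnd ℂ) (g 1 0) = -(g 1 0) := by
    have := congrFun (congrFun h 1) 0; simpa using this
  have hb : g 0 1 = -(Complex.I * ((-(g 0 1).im : ℝ) : ℂ)) := by
    have hre : (g 0 1).re = 0 := by
      have := congrArg Complex.re e01
      simp [Complex.conj_re] at this; linarith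
    apply Complex.ext <;> simp [hre]
  have hc : g 1 0 = Complex.I * (((g 1 0).im : ℝ) : ℂ) := by
    have hre : (g 1 0).re = 0 := by
      have := congrArg Complex.re e10
      simp [Complex.conj_re] at this; linarith
    apply Complex.ext <;> simp [hre]
  refine ⟨g 0 0, (g 1 0).im, -(g 0 1).im, ?_, ?_⟩
  · ext i j
    fin_cases i <;> fin_cases j
    · simp
    · simpa using hb
    · simpa using hc
    · simpa using e00.symm
  · have hdet2 : g 0 0 * g 1 1 - g 0 1 * g 1 0 = 1 := by
      rw [← Matrix.det_fin_two, hdet]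
    rw [← e00, hb, hc] at hdet2
    push_cast at hdet2
    have : ((Complex.normSq (g 0 0) - (g 1 0).im * -(g 0 1).im : ℝ) : ℂ) = 1 := by
      push_cast
      rw [← Complex.mul_conj]
      linear_combination hdet2 + ((g 1 0).im * (g 0 1).im : ℂ) * Complex.I_sq
    exact_mod_cast this
end

section
/- The action of SL(2,ℂ) on C = {g ∈ SL(2,ℂ) : g·ḡ = Id} given by g.h = h⁻¹·g·h̄ is transitive; equivalently, every g ∈ SL(2,ℂ) with g·ḡ = Id can be written as g = h⁻¹·h̄ for some h ∈ SL(2,ℂ). -/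
open Matrix Complex

lemma aux5 (g h : Matrix (Fin 2) (Fin 2) ℂ) (hdh : h.det = 1)
    (he : h * g = h.map (starRingEnd ℂ)) :
    g = h⁻¹ * h.map (starRingEnd ℂ) := by
  rw [← he, ← Matrix.mul_assoc, Matrix.nonsing_inv_mul _ (by simp [hdh]), Matrix.one_mul]

/-- The right action `g.h = h⁻¹·g·h̄` of SL(2,ℂ) on
`C = {g ∈ SL(2,ℂ) : g·ḡ = Id}` is transitive; equivalently, every `g ∈ SL(2,ℂ)` with
`g·ḡ = Id` can be written as `g = h⁻¹·h̄` for some `h ∈ SL(2,ℂ)`. -/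
theorem stmt5 (g : Matrix (Fin 2) (Fin 2) ℂ) (hdet : g.det = 1)
    (hg : g * g.map (starRingEnd ℂ) = 1) :
    ∃ h : Matrix (Fin 2) (Fin 2) ℂ, h.det = 1 ∧ g = h⁻¹ * h.map (starRingEnd ℂ) := by
  have hunit : IsUnit g.det := by simp [hdet]
  have hginv : g⁻¹ = g.map (starRingEnd ℂ) := Matrix.inv_eq_right_inv hg
  have hadj : g⁻¹ = !![g 1 1, -g 0 1; -g 1 0, g 0 0] := by
    rw [Matrix.inv_def, hdet, Matrix.adjugate_fin_two]
    simp
  have hmap : g.map (starRingEnd ℂ) = !![g 1 1, -g 0 1; -g 1 0, g 0 0] := hginv ▸ hadj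
  have e00 : starRingEnd ℂ (g 0 0) = g 1 1 := by
    have := congrFun (congrFun hmap 0) 0; simpa using this
  have e01 : starRingEnd ℂ (g 0 1) = -g 0 1 := by
    have := congrFun (congrFun hmap 0) 1; simpa using this
  have e10 : starRingEnd ℂ (g 1 0) = -g 1 0 := by
    have := congrFun (congrFun hmap 1) 0; simpa using this
  have e11 : starRingEnd ℂ (g 1 1) = g 0 0 := by
    have := congrFun (congrFun hmap 1) 1; simpa using this
  have hgcg : g.map (starRingEnd ℂ) * g = 1 := by
    rw [← hginv]; exact Matrix.nonsing_inv_mul g hunit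
  have hdet2 : g 0 0 * g 1 1 - g 0 1 * g 1 0 = 1 := by
    rw [Matrix.det_fin_two] at hdet; exact hdet
  have htconj : starRingEnd ℂ (g 0 0 + g 1 1) = g 0 0 + g 1 1 := by
    rw [map_add, e00, e11, add_comm]
  set r : ℝ := (g 0 0 + g 1 1).re with hr
  have htreal : ((r : ℝ) : ℂ) = g 0 0 + g 1 1 := Complex.conj_eq_iff_re.mp htconj
  by_cases hcase : -2 < r
  · -- h = a • (1 + ḡ)
    have hpos : (0:ℝ) < 2 + r := by linarith
    obtain ⟨a, haconj, ha2⟩ :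
        ∃ a : ℂ, starRingEnd ℂ a = a ∧ a * a * (2 + (g 0 0 + g 1 1)) = 1 := by
      refine ⟨(((Real.sqrt (2 + r))⁻¹ : ℝ) : ℂ), by simp, ?_⟩
      rw [← htreal]
      have h1 : ((Real.sqrt (2+r))⁻¹ * (Real.sqrt (2+r))⁻¹ * (2 + r) : ℝ) = 1 := by
        have h2 : Real.sqrt (2 + r) ≠ 0 := by positivity
        field_simp
        exact (Real.sq_sqrt hpos.le).symm
      exact_mod_cast h1
    refine ⟨a • (1 + g.map (starRingEnd ℂ)), ?_, ?_⟩
    · rw [Matrix.det_smul, Matrix.det_fin_two]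
      simp only [Fintype.card_fin, Matrix.add_apply, Matrix.one_apply_eq,
        Matrix.one_apply_ne (by decide : (0 : Fin 2) ≠ 1),
        Matrix.one_apply_ne (by decide : (1 : Fin 2) ≠ 0),
        Matrix.map_apply, e00, e01, e10, e11]
      linear_combination ha2 + (a*a) * hdet2
    · apply aux5
      · rw [Matrix.det_smul, Matrix.det_fin_two]
        simp only [Fintype.card_fin, Matrix.add_apply, Matrix.one_apply_eq,
          Matrix.one_apply_ne (by decide : (0 : Fin 2) ≠ 1),
          Matrix.one_apply_ne (by decide : (1 : Fin 2) ≠ 0),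
          Matrix.map_apply, e00, e01, e10, e11]
        linear_combination ha2 + (a*a) * hdet2
      · have h1 : (1 + g.map (starRingEnd ℂ)) * g = g + 1 := by
          rw [add_mul, one_mul, hgcg]
        have h2 : (a • (1 + g.map (starRingEnd ℂ))).map (starRingEnd ℂ) = a • (1 + g) := by
          ext i j
          simp [Matrix.map_apply, Matrix.add_apply, Matrix.one_apply, haconj,
            apply_ite (starRingEnd ℂ)]
          all_goals split <;> ring
        rw [Matrix.smul_mul, h1, h2, add_comm]
  · -- h = J * (a • (1 - ḡ)) with J = !![0, I; I, 0]
    have hpos : (0:ℝ) < 2 - r := by linarith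
    obtain ⟨a, haconj, ha2⟩ :
        ∃ a : ℂ, starRingEnd ℂ a = a ∧ a * a * (2 - (g 0 0 + g 1 1)) = 1 := by
      refine ⟨(((Real.sqrt (2 - r))⁻¹ : ℝ) : ℂ), by simp, ?_⟩
      rw [← htreal]
      have h1 : ((Real.sqrt (2-r))⁻¹ * (Real.sqrt (2-r))⁻¹ * (2 - r) : ℝ) = 1 := by
        have h2 : Real.sqrt (2 - r) ≠ 0 := by positivity
        field_simp
        exact (Real.sq_sqrt hpos.le).symm
      exact_mod_cast h1
    set J : Matrix (Fin 2) (Fin 2) ℂ := !![0, I; I, 0] with hJ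
    have hJdet : J.det = 1 := by
      rw [hJ, Matrix.det_fin_two_of]
      simp [Complex.I_mul_I]
    have hJmap : J.map (starRingEnd ℂ) = -J := by
      ext i j
      fin_cases i <;> fin_cases j <;> simp [hJ]
    have hdet1 : (a • (1 - g.map (starRingEnd ℂ))).det = 1 := by
      rw [Matrix.det_smul, Matrix.det_fin_two]
      simp only [Fintype.card_fin, Matrix.sub_apply, Matrix.one_apply_eq,
        Matrix.one_apply_ne (by decide : (0 : Fin 2) ≠ 1),
        Matrix.one_apply_ne (by decide : (1 : Fin 2) ≠ 0),
        Matrix.map_apply, e00, e01, e10, e11]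
      linear_combination ha2 + (a*a) * hdet2
    have hd : (J * (a • (1 - g.map (starRingEnd ℂ)))).det = 1 := by
      rw [Matrix.det_mul, hJdet, hdet1, one_mul]
    refine ⟨J * (a • (1 - g.map (starRingEnd ℂ))), hd, ?_⟩
    apply aux5 _ _ hd
    have h1 : (1 - g.map (starRingEnd ℂ)) * g = g - 1 := by
      rw [sub_mul, one_mul, hgcg]
    have h2 : (a • (1 - g.map (starRingEnd ℂ))).map (starRingEnd ℂ) = a • (1 - g) := by
      ext i j
      simp [Matrix.map_apply, Matrix.sub_apply, Matrix.one_apply, haconj,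
        apply_ite (starRingEnd ℂ)]
    have lhs : J * (a • (1 - g.map (starRingEnd ℂ))) * g = J * (a • (g - 1)) := by
      rw [Matrix.mul_assoc, Matrix.smul_mul, h1]
    have rhs : (J * (a • (1 - g.map (starRingEnd ℂ)))).map (starRingEnd ℂ)
        = (-J) * (a • (1 - g)) := by
      rw [Matrix.map_mul, hJmap, h2]
    rw [lhs, rhs, Matrix.neg_mul, ← Matrix.mul_neg, ← smul_neg, neg_sub]
end

section
/- Let W₁ and W₂ be complex vector spaces and let s : W₁ → W₂ and t : W₂ → W₁ be conjugate-linear maps with t∘s = id and s∘t = id. For λ ∈ ℂ define the ℝ-linear endomorphism Î_λ of W₁ × W₂ by Î_λ(α, φ) = (1+|λ|²)⁻¹·((1-|λ|²)·i·α + 2iλ·t(φ), (1-|λ|²)·i·φ - 2iλ·s(α)), and define F_λ : W₁ × W₂ → W₁ × W₂ by F_λ(α, φ) = (α + λ·t(φ), φ - λ·s(α)). Then F_λ is an ℝ-linear bijection and F_λ(Î_λ(α, φ)) = i·F_λ(α, φ) for all (α, φ); i.e. F_λ intertwines the complex structure Î_λ with the standard complex structure given by multiplication by i. -/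
open Complex

/-- Let `W₁, W₂` be complex vector spaces and `s : W₁ → W₂`,
`t : W₂ → W₁` conjugate-linear maps with `t∘s = id`, `s∘t = id` (modelling the adjoint
operations `α ↦ α*`, `φ ↦ φ*` on forms).  For `λ ∈ ℂ` let
`Î_λ(α,φ) = (1+|λ|²)⁻¹·((1-|λ|²)·i·α + 2iλ·t(φ), (1-|λ|²)·i·φ - 2iλ·s(α))` and
`F_λ(α,φ) = (α + λ·t(φ), φ - λ·s(α))`.  Then `F_λ` is a (real-linear) bijection and
`F_λ ∘ Î_λ = i·F_λ`, i.e. `F_λ` intertwines `Î_λ` with multiplication by `i`. -/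
theorem stmt11 {W₁ W₂ : Type*} [AddCommGroup W₁] [Module ℂ W₁]
    [AddCommGroup W₂] [Module ℂ W₂]
    (s : W₁ →ₗ⋆[ℂ] W₂) (t : W₂ →ₗ⋆[ℂ] W₁)
    (hts : ∀ x, t (s x) = x) (hst : ∀ y, s (t y) = y) (l : ℂ) :
    ∀ F Ihat : W₁ × W₂ → W₁ × W₂,
      (F = fun p => (p.1 + l • t p.2, p.2 - l • s p.1)) →
      (Ihat = fun p =>
        ((((1 + Complex.normSq l : ℝ) : ℂ))⁻¹ •
            (((1 - Complex.normSq l : ℝ) : ℂ) • (Complex.I • p.1)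
              + (2 * Complex.I * l) • t p.2),
         (((1 + Complex.normSq l : ℝ) : ℂ))⁻¹ •
            (((1 - Complex.normSq l : ℝ) : ℂ) • (Complex.I • p.2)
              - (2 * Complex.I * l) • s p.1))) →
      Function.Bijective F ∧ ∀ p : W₁ × W₂, F (Ihat p) = Complex.I • F p := by
  intro F Ihat hF hI
  subst hF hI
  have h0 : (0:ℝ) < 1 + Complex.normSq l := by
    have := Complex.normSq_nonneg l; linarith
  have hc : (((1 + Complex.normSq l : ℝ) : ℂ)) ≠ 0 := by
    exact_mod_cast h0.ne'
  have h1 : (1 + (starRingEnd ℂ) l * l) ≠ 0 := by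
    rw [← Complex.normSq_eq_conj_mul_self]
    exact_mod_cast h0.ne'
  constructor
  · apply Function.bijective_iff_has_inverse.mpr
    refine ⟨fun p => ((((1 + Complex.normSq l : ℝ) : ℂ))⁻¹ • (p.1 - l • t p.2),
      (((1 + Complex.normSq l : ℝ) : ℂ))⁻¹ • (p.2 + l • s p.1)), fun p => ?_, fun p => ?_⟩ <;>
    · ext <;>
      · simp only [map_add, map_sub, map_smulₛₗ, hts, hst, smul_add, smul_sub, smul_smul,
          map_inv₀, Complex.conj_ofReal, Complex.conj_I, map_mul, map_ofNat]
        match_scalars <;> push_cast <;>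
          simp only [Complex.normSq_eq_conj_mul_self] <;> field_simp <;> ring
  · intro p
    ext <;>
    · simp only [map_add, map_sub, map_smulₛₗ, hts, hst, map_inv₀, Complex.conj_ofReal,
        Complex.conj_I, map_mul, map_ofNat, smul_add, smul_sub, smul_smul, Prod.smul_fst, Prod.smul_snd]
      match_scalars <;> push_cast <;>
        simp only [Complex.normSq_eq_conj_mul_self] <;> field_simp <;> ring
end

section
/- Let g : ℂ → M₂(ℂ) be a map whose four entries are polynomial functions of λ, with det g(λ) = 1 for all λ ∈ ℂ, and suppose that for all λ ∈ ℂ \ {0} one has g(λ)⁻¹ = -conj(g(-1/λ̄)), where conj denotes entrywise complex conjugation of the matrix. Then g is constant. -/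
open Matrix Complex

/-- If a polynomial `p` agrees with `r ∘ (·⁻¹)` away from `0`, then `p` is constant. -/
lemma aux_const (p r : Polynomial ℂ)
    (h : ∀ l : ℂ, l ≠ 0 → p.eval l = r.eval l⁻¹) (l μ : ℂ) :
    p.eval l = p.eval μ := by
  set N := r.natDegree with hN
  have key : Polynomial.X ^ N * p = r.reflect N := by
    have hs : (Polynomial.X ^ N * p - r.reflect N) = 0 := by
      apply Polynomial.eq_zero_of_infinite_isRoot
      apply Set.Infinite.mono (s := ({(0:ℂ)}ᶜ : Set ℂ))
      · intro x hx
        have hx0 : x ≠ 0 := hx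
        have : Invertible (x⁻¹ : ℂ) := invertibleOfNonzero (inv_ne_zero hx0)
        have h2 := Polynomial.eval₂_reflect_mul_pow (RingHom.id ℂ) x⁻¹ N r le_rfl
        rw [invOf_eq_inv, inv_inv] at h2
        have h2' : (r.reflect N).eval x * x⁻¹ ^ N = r.eval x⁻¹ := h2
        have h3 : (r.reflect N).eval x = r.eval x⁻¹ * x ^ N := by
          have hxN : (x : ℂ) ^ N ≠ 0 := pow_ne_zero _ hx0
          rw [← h2']
          field_simp
          rw [mul_assoc, ← mul_pow, one_div_mul_cancel hx0, one_pow, mul_one]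
        show Polynomial.IsRoot _ x
        simp only [Polynomial.IsRoot, Polynomial.eval_sub, Polynomial.eval_mul,
          Polynomial.eval_pow, Polynomial.eval_X, h x hx0, h3]
        ring
      · exact (Set.finite_singleton (0:ℂ)).infinite_compl
    exact sub_eq_zero.mp hs
  have hcoeff : ∀ k : ℕ, p.coeff (k + 1) = 0 := by
    intro k
    have h1 : p.coeff (k + 1) = (Polynomial.X ^ N * p).coeff (k + 1 + N) :=
      (Polynomial.coeff_X_pow_mul p N (k + 1)).symm
    rw [key, Polynomial.coeff_reflect,
      Polynomial.revAt_eq_self_of_lt (by omega)] at h1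
    rw [h1]
    exact Polynomial.coeff_eq_zero_of_natDegree_lt (by omega)
  have hp : p = Polynomial.C (p.coeff 0) := by
    ext n
    cases n with
    | zero => simp
    | succ k => simp [Polynomial.coeff_C, hcoeff k]
  rw [hp]; simp

/-- Let `g : ℂ → M₂(ℂ)` have polynomial entries, with
`det g(λ) = 1` for all `λ`, and suppose `g(λ)⁻¹ = -conj(g(-1/λ̄))` for all `λ ≠ 0`
(where `conj` is entrywise conjugation).  Then `g` is constant. -/
theorem stmt15 (g : ℂ → Matrix (Fin 2) (Fin 2) ℂ)
    (hpoly : ∀ i j : Fin 2, ∃ p : Polynomial ℂ, ∀ l : ℂ, g l i j = p.eval l)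
    (hdet : ∀ l : ℂ, (g l).det = 1)
    (hreal : ∀ l : ℂ, l ≠ 0 →
      (g l)⁻¹ = -((g (-((starRingEnd ℂ) l)⁻¹)).map (starRingEnd ℂ))) :
    ∀ l μ : ℂ, g l = g μ := by
  -- the inverse equals the adjugate
  have hinv : ∀ l : ℂ, (g l)⁻¹ = (g l).adjugate := by
    intro l
    rw [Matrix.inv_def, hdet l]
    simp
  -- adjugate entries are polynomial
  have hpadj : ∀ i j : Fin 2, ∃ p : Polynomial ℂ, ∀ l : ℂ, (g l).adjugate i j = p.eval l := by
    intro i j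
    fin_cases i <;> fin_cases j
    · obtain ⟨p, hp⟩ := hpoly 1 1
      exact ⟨p, fun l => by rw [adjugate_fin_two]; simpa using hp l⟩
    · obtain ⟨p, hp⟩ := hpoly 0 1
      exact ⟨-p, fun l => by rw [adjugate_fin_two]; simp [hp l]⟩
    · obtain ⟨p, hp⟩ := hpoly 1 0
      exact ⟨-p, fun l => by rw [adjugate_fin_two]; simp [hp l]⟩
    · obtain ⟨p, hp⟩ := hpoly 0 0
      exact ⟨p, fun l => by rw [adjugate_fin_two]; simpa using hp l⟩
  -- adjugate entries are also polynomial in `l⁻¹`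
  have hradj : ∀ i j : Fin 2, ∃ r : Polynomial ℂ, ∀ l : ℂ, l ≠ 0 →
      (g l).adjugate i j = r.eval l⁻¹ := by
    intro i j
    obtain ⟨q, hq⟩ := hpoly i j
    refine ⟨-((q.map (starRingEnd ℂ)).comp (-Polynomial.X)), fun l hl => ?_⟩
    have h1 := congrFun (congrFun ((hinv l).symm.trans (hreal l hl)) i) j
    have hc : (starRingEnd ℂ) (-((starRingEnd ℂ) l)⁻¹) = -l⁻¹ := by
      simp
    calc (g l).adjugate i j
        = -((starRingEnd ℂ) (g (-((starRingEnd ℂ) l)⁻¹) i j)) := by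
          simpa [Matrix.neg_apply, Matrix.map_apply] using h1
      _ = -((starRingEnd ℂ) (q.eval (-((starRingEnd ℂ) l)⁻¹))) := by rw [hq]
      _ = -((q.map (starRingEnd ℂ)).eval (-l⁻¹)) := by
          rw [← hc, Polynomial.eval_map, Polynomial.eval₂_at_apply]
      _ = (-((q.map (starRingEnd ℂ)).comp (-Polynomial.X))).eval l⁻¹ := by
          simp [Polynomial.eval_comp]
  -- hence the adjugate is constant
  have hadjconst : ∀ l μ : ℂ, (g l).adjugate = (g μ).adjugate := by
    intro l μ
    ext i j
    obtain ⟨p, hp⟩ := hpadj i j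
    obtain ⟨r, hr⟩ := hradj i j
    rw [hp l, hp μ]
    exact aux_const p r (fun x hx => by rw [← hp x, hr x hx]) l μ
  -- recover `g` from its adjugate
  have hgg : ∀ l : ℂ, (g l).adjugate.adjugate = g l := by
    intro l
    rw [Matrix.adjugate_adjugate _ (by simp : Fintype.card (Fin 2) ≠ 1), hdet l]
    simp
  intro l μ
  rw [← hgg l, ← hgg μ, hadjconst l μ]
end
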